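/- arXiv:2605.04331 — 3 statements merged into one kernel-verified Lean document; each statement's English description precedes it below -/
import Mathlib

section
/- Let △₀ be the equilateral triangle with vertices (0,0), (1,0), (1/2, √3/2), and let U₁(x,y) := sin(4πy/√3) − 2 sin(2πy/√3) cos(2πx). Then ∫_{△₀} (∂U₁/∂x)(∂U₁/∂y) dx dy = 0. -/
open MeasureTheory

/-- The first eigenfunction of the equilateral triangle of side length 1. -/
noncomputable def U₁ (x y : ℝ) : ℝ :=
  Real.sin (4 * Real.pi * y / Real.sqrt 3) -
    2 * Real.sin (2 * Real.pi * y / Real.sqrt 3) * Real.cos (2 * Real.pi * x)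

/-- The equilateral triangle with vertices `(0,0)`, `(1,0)`, `(1/2, √3/2)`. -/
noncomputable def T0 : Set (ℝ × ℝ) :=
  convexHull ℝ {((0 : ℝ), (0 : ℝ)), (1, 0), (1 / 2, Real.sqrt 3 / 2)}

lemma hdx (x y : ℝ) : HasDerivAt (fun t => U₁ t y)
    (2 * Real.sin (2 * Real.pi * y / Real.sqrt 3) * (2 * Real.pi) * Real.sin (2 * Real.pi * x)) x := by
  have h1 : HasDerivAt (fun t : ℝ => Real.cos (2 * Real.pi * t))
      (-Real.sin (2 * Real.pi * x) * (2 * Real.pi * 1)) x :=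
    (Real.hasDerivAt_cos (2 * Real.pi * x)).comp x ((hasDerivAt_id x).const_mul (2 * Real.pi))
  have h2 := (hasDerivAt_const x (Real.sin (4 * Real.pi * y / Real.sqrt 3))).sub
    (h1.const_mul (2 * Real.sin (2 * Real.pi * y / Real.sqrt 3)))
  refine h2.congr_deriv ?_
  ring

lemma hdy (x y : ℝ) : HasDerivAt (fun t => U₁ x t)
    (Real.cos (4 * Real.pi * y / Real.sqrt 3) * (4 * Real.pi / Real.sqrt 3) -
      2 * Real.cos (2 * Real.pi * x) * (Real.cos (2 * Real.pi * y / Real.sqrt 3) * (2 * Real.pi / Real.sqrt 3))) y := by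
  have e : (fun t => U₁ x t) = fun t =>
      Real.sin ((4 * Real.pi / Real.sqrt 3) * t) -
        Real.sin ((2 * Real.pi / Real.sqrt 3) * t) * (2 * Real.cos (2 * Real.pi * x)) := by
    funext t; unfold U₁; ring_nf
  rw [e]
  have h1 : HasDerivAt (fun t : ℝ => Real.sin ((4 * Real.pi / Real.sqrt 3) * t))
      (Real.cos ((4 * Real.pi / Real.sqrt 3) * y) * (4 * Real.pi / Real.sqrt 3 * 1)) y :=
    (Real.hasDerivAt_sin _).comp y ((hasDerivAt_id y).const_mul _)
  have h2 : HasDerivAt (fun t : ℝ => Real.sin ((2 * Real.pi / Real.sqrt 3) * t))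
      (Real.cos ((2 * Real.pi / Real.sqrt 3) * y) * (2 * Real.pi / Real.sqrt 3 * 1)) y :=
    (Real.hasDerivAt_sin _).comp y ((hasDerivAt_id y).const_mul _)
  have h3 := h1.sub (h2.mul_const (2 * Real.cos (2 * Real.pi * x)))
  refine h3.congr_deriv ?_
  ring_nf

lemma sin_refl (x : ℝ) : Real.sin (2 * Real.pi * (1 - x)) = -Real.sin (2 * Real.pi * x) := by
  rw [show 2 * Real.pi * (1 - x) = 2 * Real.pi - 2 * Real.pi * x by ring, Real.sin_sub,
    Real.sin_two_pi, Real.cos_two_pi]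
  ring

lemma cos_refl (x : ℝ) : Real.cos (2 * Real.pi * (1 - x)) = Real.cos (2 * Real.pi * x) := by
  rw [show 2 * Real.pi * (1 - x) = 2 * Real.pi - 2 * Real.pi * x by ring, Real.cos_sub,
    Real.sin_two_pi, Real.cos_two_pi]
  ring

/-- the reflection `(x, y) ↦ (1 - x, y)` as an affine map -/
noncomputable def σA : (ℝ × ℝ) →ᵃ[ℝ] (ℝ × ℝ) where
  toFun p := (1 - p.1, p.2)
  linear := ((-LinearMap.fst ℝ ℝ ℝ).prod (LinearMap.snd ℝ ℝ ℝ))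
  map_vadd' p v := by
    simp [Prod.ext_iff]
    ring

/-- The integral of `(∂U₁/∂x)(∂U₁/∂y)` over the equilateral triangle vanishes. -/
theorem statement7 :
    ∫ p in T0, (deriv (fun t => U₁ t p.2) p.1) * (deriv (fun t => U₁ p.1 t) p.2) = 0 := by
  set f : ℝ × ℝ → ℝ :=
    fun p => (deriv (fun t => U₁ t p.2) p.1) * (deriv (fun t => U₁ p.1 t) p.2) with hf
  show ∫ p in T0, f p = 0
  set σ : ℝ × ℝ → ℝ × ℝ := fun p => (1 - p.1, p.2) with hσ
  have hmp : MeasurePreserving σ volume volume := by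
    have := (Measure.measurePreserving_sub_left (volume : Measure ℝ) 1).prod
      (MeasurePreserving.id (volume : Measure ℝ))
    exact this
  have hemb : MeasurableEmbedding σ := by
    have : σ = ⇑((Homeomorph.subLeft (1:ℝ)).prodCongr (Homeomorph.refl ℝ)) := by
      funext p; rfl
    rw [this]
    exact (Homeomorph.measurableEmbedding _)
  have himg : σ '' T0 = T0 := by
    have hcoe : σ = ⇑σA := by funext p; rfl
    rw [hcoe, T0, AffineMap.image_convexHull]
    congr 1
    have h0 : σA ((0:ℝ), (0:ℝ)) = ((1:ℝ), (0:ℝ)) := by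
      show ((1:ℝ) - 0, (0:ℝ)) = (1, 0); norm_num
    have h1 : σA ((1:ℝ), (0:ℝ)) = ((0:ℝ), (0:ℝ)) := by
      show ((1:ℝ) - 1, (0:ℝ)) = (0, 0); norm_num
    have h2 : σA ((1/2 : ℝ), Real.sqrt 3 / 2) = ((1/2 : ℝ), Real.sqrt 3 / 2) := by
      show ((1:ℝ) - 1/2, Real.sqrt 3 / 2) = (1/2, Real.sqrt 3 / 2); norm_num
    rw [Set.image_insert_eq, Set.image_insert_eq, Set.image_singleton, h0, h1, h2]
    ext p
    simp only [Set.mem_insert_iff, Set.mem_singleton_iff]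
    tauto
  have hodd : ∀ p : ℝ × ℝ, f (σ p) = -f p := by
    rintro ⟨x, y⟩
    simp only [hf, hσ]
    rw [(hdx x y).deriv, (hdy x y).deriv, (hdx (1-x) y).deriv, (hdy (1-x) y).deriv,
      sin_refl, cos_refl]
    ring
  have key : ∫ p in T0, f p = -∫ p in T0, f p := by
    conv_lhs => rw [← himg, hmp.setIntegral_image_emb hemb]
    simp only [hodd]
    rw [integral_neg]
  linarith [key]
end

section
/- Let △₀ be the equilateral triangle with vertices (0,0), (1,0), (1/2, √3/2), and let U₁(x,y) := sin(4πy/√3) − 2 sin(2πy/√3) cos(2πx). Then ∫_{△₀} (∂U₁/∂y)² dx dy = (8π²/3) ∫_{△₀} U₁² dx dy; equivalently, the L²-normalized first eigenfunction u₁ = U₁/‖U₁‖ satisfies ∫_{△₀} (∂u₁/∂y)² = λ₁/2 with λ₁ = 16π²/3. -/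
open MeasureTheory

namespace Stmt8Aux

open Real Set

lemma sqrt3_pos : (0:ℝ) < Real.sqrt 3 := Real.sqrt_pos.2 (by norm_num)
lemma sqrt3_ne : Real.sqrt 3 ≠ 0 := ne_of_gt sqrt3_pos
lemma sq_sqrt3 : Real.sqrt 3 ^ 2 = 3 := Real.sq_sqrt (by norm_num)

lemma sin_four_pi : Real.sin (4*π) = 0 := by
  rw [show (4:ℝ)*π = 2*π + 2*π by ring, Real.sin_add, Real.sin_two_pi, Real.cos_two_pi]; ring

lemma cos_four_pi : Real.cos (4*π) = 1 := by
  rw [show (4:ℝ)*π = 2*π + 2*π by ring, Real.cos_add, Real.sin_two_pi, Real.cos_two_pi]; ring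

lemma sin_four_pi_sub (x : ℝ) : Real.sin (4*π - x) = -Real.sin x := by
  rw [Real.sin_sub, sin_four_pi, cos_four_pi]; ring

lemma T0_eq : T0 = {p : ℝ × ℝ |
    0 ≤ p.2 ∧ p.2 ≤ Real.sqrt 3 * p.1 ∧ p.2 ≤ Real.sqrt 3 * (1 - p.1)} := by
  apply Subset.antisymm
  · apply convexHull_min
    · rintro p hp
      simp only [Set.mem_insert_iff, Set.mem_singleton_iff] at hp
      have h3 := sqrt3_pos
      rcases hp with h | h | h <;> subst h
      · exact ⟨le_refl 0, by simp, by positivity⟩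
      · exact ⟨le_refl 0, by positivity, by simp⟩
      · refine ⟨by positivity, le_of_eq (by ring), le_of_eq (by ring)⟩
    · rintro p hp q hq a b ha hb hab
      obtain ⟨hp1, hp2, hp3⟩ := hp
      obtain ⟨hq1, hq2, hq3⟩ := hq
      simp only [Set.mem_setOf_eq, Prod.fst_add, Prod.snd_add, Prod.smul_fst, Prod.smul_snd,
        smul_eq_mul]
      refine ⟨by positivity, ?_, ?_⟩ <;> nlinarith
  · rintro ⟨x, y⟩ ⟨h1, h2, h3⟩
    replace h1 : 0 ≤ y := h1
    replace h2 : y ≤ Real.sqrt 3 * x := h2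
    replace h3 : y ≤ Real.sqrt 3 * (1 - x) := h3
    have hy3 : Real.sqrt 3 * (y / Real.sqrt 3) = y := by field_simp
    have key := Finset.centerMass_mem_convexHull (Finset.univ : Finset (Fin 3))
      (w := ![1 - x - y / Real.sqrt 3, x - y / Real.sqrt 3, 2 * y / Real.sqrt 3])
      (z := ![((0:ℝ), (0:ℝ)), (1, 0), (1/2, Real.sqrt 3 / 2)])
      (s := {((0 : ℝ), (0 : ℝ)), (1, 0), (1 / 2, Real.sqrt 3 / 2)})
      ?_ ?_ ?_
    · have hcm : (Finset.univ : Finset (Fin 3)).centerMass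
          ![1 - x - y / Real.sqrt 3, x - y / Real.sqrt 3, 2 * y / Real.sqrt 3]
          ![((0:ℝ), (0:ℝ)), (1, 0), (1/2, Real.sqrt 3 / 2)] = (x, y) := by
        rw [Finset.centerMass]
        simp only [Fin.sum_univ_three, Matrix.cons_val_zero, Matrix.cons_val_one,
          Matrix.head_cons, Matrix.cons_val_two, Matrix.tail_cons]
        rw [show (1 - x - y / Real.sqrt 3) + (x - y / Real.sqrt 3) + 2 * y / Real.sqrt 3
            = 1 by field_simp; ring]
        rw [inv_one, one_smul]
        have : ∀ (c : ℝ) (u v : ℝ), c • ((u, v) : ℝ × ℝ) = (c * u, c * v) := by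
          intro c u v; rfl
        simp only [this, Prod.mk_add_mk, Prod.mk.injEq]
        constructor
        · field_simp; ring
        · field_simp; ring
      rw [hcm] at key
      exact key
    · intro i _
      fin_cases i
      · show (0:ℝ) ≤ 1 - x - y / Real.sqrt 3
        have h := (div_le_iff₀ sqrt3_pos).mpr (show y ≤ (1 - x) * Real.sqrt 3 by nlinarith)
        linarith
      · show (0:ℝ) ≤ x - y / Real.sqrt 3
        have h := (div_le_iff₀ sqrt3_pos).mpr (show y ≤ x * Real.sqrt 3 by nlinarith)
        linarith
      · show (0:ℝ) ≤ 2 * y / Real.sqrt 3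
        exact div_nonneg (by linarith) sqrt3_pos.le
    · rw [Fin.sum_univ_three]
      simp only [Matrix.cons_val_zero, Matrix.cons_val_one, Matrix.head_cons,
        Matrix.cons_val_two, Matrix.tail_cons]
      rw [show (1 - x - y / Real.sqrt 3) + (x - y / Real.sqrt 3) + 2 * y / Real.sqrt 3
          = 1 by field_simp; ring]
      norm_num
    · intro i _
      fin_cases i <;> simp

lemma T0_memb (x y : ℝ) : (x, y) ∈ T0 ↔
    (0 ≤ y ∧ y ≤ Real.sqrt 3 * x ∧ y ≤ Real.sqrt 3 * (1 - x)) := by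
  rw [T0_eq]; exact Iff.rfl

lemma measurableSet_T0 : MeasurableSet T0 := by
  rw [T0_eq]
  apply IsClosed.measurableSet
  have : {p : ℝ × ℝ | 0 ≤ p.2 ∧ p.2 ≤ Real.sqrt 3 * p.1 ∧ p.2 ≤ Real.sqrt 3 * (1 - p.1)}
      = {p : ℝ × ℝ | 0 ≤ p.2} ∩ ({p : ℝ × ℝ | p.2 ≤ Real.sqrt 3 * p.1}
        ∩ {p : ℝ × ℝ | p.2 ≤ Real.sqrt 3 * (1 - p.1)}) := rfl
  rw [this]
  exact (isClosed_le continuous_const continuous_snd).inter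
    ((isClosed_le continuous_snd (continuous_const.mul continuous_fst)).inter
      (isClosed_le continuous_snd (continuous_const.mul (continuous_const.sub continuous_fst))))

lemma isCompact_T0 : IsCompact T0 :=
  Set.Finite.isCompact_convexHull ℝ (Set.toFinite _)

lemma integral_T0 (f : ℝ × ℝ → ℝ) (hf : Continuous f) :
    ∫ p in T0, f p
      = ∫ y in (0:ℝ)..(Real.sqrt 3 / 2),
          ∫ x in (y / Real.sqrt 3)..(1 - y / Real.sqrt 3), f (x, y) := by
  have hm := measurableSet_T0
  have hio : IntegrableOn f T0 := hf.continuousOn.integrableOn_compact isCompact_T0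
  have hind : Integrable (T0.indicator f) := (integrable_indicator_iff hm).2 hio
  rw [← integral_indicator hm]
  rw [Measure.volume_eq_prod] at hind ⊢
  rw [integral_prod_symm _ hind]
  have key : ∀ y : ℝ, (∫ x, T0.indicator f (x, y))
      = (Set.Icc (0:ℝ) (Real.sqrt 3 / 2)).indicator
          (fun y => ∫ x in (y / Real.sqrt 3)..(1 - y / Real.sqrt 3), f (x, y)) y := by
    intro y
    by_cases hy : y ∈ Set.Icc (0:ℝ) (Real.sqrt 3 / 2)
    · rw [Set.indicator_of_mem hy]
      obtain ⟨hy0, hyL⟩ := hy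
      have hle : y / Real.sqrt 3 ≤ 1 - y / Real.sqrt 3 := by
        have h : y / Real.sqrt 3 ≤ 1 / 2 := by
          rw [div_le_iff₀ sqrt3_pos]; nlinarith [sqrt3_pos]
        linarith
      have h1 : ∀ x, T0.indicator f (x, y)
          = (Set.Icc (y / Real.sqrt 3) (1 - y / Real.sqrt 3)).indicator
              (fun x => f (x, y)) x := by
        intro x
        by_cases hx : (x, y) ∈ T0
        · rw [Set.indicator_of_mem hx, Set.indicator_of_mem]
          obtain ⟨_, h2, h3⟩ := (T0_memb x y).1 hx
          constructor
          · rw [div_le_iff₀ sqrt3_pos]; nlinarith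
          · have : y / Real.sqrt 3 ≤ 1 - x := by
              rw [div_le_iff₀ sqrt3_pos]; nlinarith
            linarith
        · rw [Set.indicator_of_notMem hx, Set.indicator_of_notMem]
          intro hxm
          obtain ⟨ha, hb⟩ := hxm
          apply hx
          rw [T0_memb]
          rw [div_le_iff₀ sqrt3_pos] at ha
          refine ⟨hy0, by nlinarith, ?_⟩
          have : y / Real.sqrt 3 ≤ 1 - x := by linarith
          rw [div_le_iff₀ sqrt3_pos] at this
          nlinarith
      simp only [h1]
      rw [integral_indicator measurableSet_Icc, integral_Icc_eq_integral_Ioc,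
        ← intervalIntegral.integral_of_le hle]
    · rw [Set.indicator_of_notMem hy]
      have h1 : ∀ x, T0.indicator f (x, y) = 0 := by
        intro x
        apply Set.indicator_of_notMem
        rw [T0_memb]
        rintro ⟨ha, hb, hc⟩
        exact hy ⟨ha, by nlinarith⟩
      simp only [h1, integral_zero]
  simp only [key]
  rw [integral_indicator measurableSet_Icc, integral_Icc_eq_integral_Ioc,
    ← intervalIntegral.integral_of_le (by positivity : (0:ℝ) ≤ Real.sqrt 3 / 2)]

lemma inner_integral (A B a : ℝ) :
    ∫ x in a..(1-a), (A + B * Real.cos (2*π*x))^2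
      = A^2*(1-2*a) + (A*B/π)*(Real.sin (2*π*(1-a)) - Real.sin (2*π*a))
        + B^2*((1-2*a)/2 + (Real.sin (4*π*(1-a)) - Real.sin (4*π*a))/(8*π)) := by
  have hπ := Real.pi_ne_zero
  have hderiv : ∀ x ∈ Set.uIcc a (1-a), HasDerivAt
      (fun x => A^2*x + (A*B/π)*Real.sin (2*π*x) + B^2*(x/2 + Real.sin (4*π*x)/(8*π)))
      ((A + B * Real.cos (2*π*x))^2) x := by
    intro x _
    have h2 : HasDerivAt (fun x : ℝ => 2*π*x) (2*π) x := by
      simpa using (hasDerivAt_id x).const_mul (2*π)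
    have h4 : HasDerivAt (fun x : ℝ => 4*π*x) (4*π) x := by
      simpa using (hasDerivAt_id x).const_mul (4*π)
    have hA : HasDerivAt (fun x : ℝ => A^2*x) (A^2 * 1) x := (hasDerivAt_id x).const_mul (A^2)
    have hB : HasDerivAt (fun x : ℝ => (A*B/π)*Real.sin (2*π*x))
        ((A*B/π) * (Real.cos (2*π*x) * (2*π))) x := (h2.sin).const_mul (A*B/π)
    have hC : HasDerivAt (fun x : ℝ => B^2*(x/2 + Real.sin (4*π*x)/(8*π)))
        (B^2 * (1/2 + Real.cos (4*π*x) * (4*π)/(8*π))) x := by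
      exact (((hasDerivAt_id x).div_const 2).add ((h4.sin).div_const (8*π))).const_mul (B^2)
    have htot := (hA.add hB).add hC
    have heq : A^2 * 1 + (A*B/π) * (Real.cos (2*π*x) * (2*π))
        + B^2 * (1/2 + Real.cos (4*π*x) * (4*π)/(8*π))
        = (A + B * Real.cos (2*π*x))^2 := by
      rw [show (4:ℝ)*π*x = 2*(2*π*x) by ring, Real.cos_two_mul]
      field_simp
      ring
    exact heq ▸ htot
  rw [intervalIntegral.integral_eq_sub_of_hasDerivAt hderiv
    ((by fun_prop : Continuous fun x : ℝ => (A + B * Real.cos (2*π*x))^2).intervalIntegrable _ _)]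
  ring

lemma out1 : ∫ y in (0:ℝ)..(Real.sqrt 3 / 2), (1 - 2*y/Real.sqrt 3) = Real.sqrt 3 / 4 := by
  have hd : ∀ y ∈ Set.uIcc (0:ℝ) (Real.sqrt 3 / 2),
      HasDerivAt (fun y : ℝ => y - y^2/Real.sqrt 3) (1 - 2*y/Real.sqrt 3) y := by
    intro y _
    have h1 : HasDerivAt (fun y : ℝ => y^2/Real.sqrt 3) (2*y/Real.sqrt 3) y := by
      simpa using (hasDerivAt_pow 2 y).div_const (Real.sqrt 3)
    exact (hasDerivAt_id' y).sub h1
  rw [intervalIntegral.integral_eq_sub_of_hasDerivAt hd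
    ((by fun_prop : Continuous fun y : ℝ => (1 - 2*y/Real.sqrt 3)).intervalIntegrable _ _)]
  have hne := sqrt3_ne
  rw [show ((Real.sqrt 3 / 2)^2 : ℝ) = 3/4 by rw [div_pow, sq_sqrt3]; norm_num]
  rw [show ((3:ℝ)/4)/Real.sqrt 3 = Real.sqrt 3 / 4 by
    field_simp
    linear_combination (-1) * sq_sqrt3]
  ring

lemma out2 (k : ℝ) (hk : k ≠ 0) (hcos : Real.cos (k*(Real.sqrt 3 / 2)) = 1) :
    ∫ y in (0:ℝ)..(Real.sqrt 3 / 2), (1 - 2*y/Real.sqrt 3) * Real.cos (k*y) = 0 := by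
  have hne := sqrt3_ne
  have hd : ∀ y ∈ Set.uIcc (0:ℝ) (Real.sqrt 3 / 2), HasDerivAt
      (fun y : ℝ => (1 - 2*y/Real.sqrt 3) * Real.sin (k*y)/k
        - (2/Real.sqrt 3) * Real.cos (k*y)/k^2)
      ((1 - 2*y/Real.sqrt 3) * Real.cos (k*y)) y := by
    intro y _
    have hky : HasDerivAt (fun y : ℝ => k*y) k y := by
      simpa using (hasDerivAt_id y).const_mul k
    have hlin : HasDerivAt (fun y : ℝ => 1 - 2*y/Real.sqrt 3) (0 - 2*1/Real.sqrt 3) y := by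
      exact (hasDerivAt_const y 1).sub (((hasDerivAt_id y).const_mul 2).div_const (Real.sqrt 3))
    have h1 := ((hlin.mul hky.sin).div_const k).sub (((hky.cos).const_mul (2/Real.sqrt 3)).div_const (k^2))
    have heq : ((0 - 2*1/Real.sqrt 3) * Real.sin (k*y) + (1 - 2*y/Real.sqrt 3) * (Real.cos (k*y) * k))/k
        - (2/Real.sqrt 3) * (-Real.sin (k*y) * k)/k^2
        = (1 - 2*y/Real.sqrt 3) * Real.cos (k*y) := by
      field_simp
      ring
    exact heq ▸ h1
  rw [intervalIntegral.integral_eq_sub_of_hasDerivAt hd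
    ((by fun_prop : Continuous fun y : ℝ => (1 - 2*y/Real.sqrt 3) * Real.cos (k*y)).intervalIntegrable _ _)]
  rw [hcos, show (1:ℝ) - 2*(Real.sqrt 3 / 2)/Real.sqrt 3 = 0 by field_simp; ring]
  simp

lemma out3 (k : ℝ) (hk : k ≠ 0) (hcos : Real.cos (k*(Real.sqrt 3 / 2)) = 1) :
    ∫ y in (0:ℝ)..(Real.sqrt 3 / 2), Real.sin (k*y) = 0 := by
  have hd : ∀ y ∈ Set.uIcc (0:ℝ) (Real.sqrt 3 / 2), HasDerivAt
      (fun y : ℝ => -(Real.cos (k*y)/k)) (Real.sin (k*y)) y := by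
    intro y _
    have hky : HasDerivAt (fun y : ℝ => k*y) k y := by
      simpa using (hasDerivAt_id y).const_mul k
    have h1 := ((hky.cos).div_const k).neg
    have heq : -((-Real.sin (k*y) * k)/k) = Real.sin (k*y) := by field_simp
    exact heq ▸ h1
  rw [intervalIntegral.integral_eq_sub_of_hasDerivAt hd
    ((by fun_prop : Continuous fun y : ℝ => Real.sin (k*y)).intervalIntegrable _ _)]
  rw [hcos]
  simp

lemma k1_ne : (4*π/Real.sqrt 3 : ℝ) ≠ 0 := by
  apply div_ne_zero _ sqrt3_ne
  positivity

lemma k2_ne : (8*π/Real.sqrt 3 : ℝ) ≠ 0 := by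
  apply div_ne_zero _ sqrt3_ne
  positivity

lemma k1_cos : Real.cos ((4*π/Real.sqrt 3)*(Real.sqrt 3 / 2)) = 1 := by
  rw [show (4*π/Real.sqrt 3)*(Real.sqrt 3 / 2) = 2*π by field_simp; ring]
  exact Real.cos_two_pi

lemma k2_cos : Real.cos ((8*π/Real.sqrt 3)*(Real.sqrt 3 / 2)) = 1 := by
  rw [show (8*π/Real.sqrt 3)*(Real.sqrt 3 / 2) = 4*π by field_simp; ring]
  exact cos_four_pi

lemma outer_combo (c₁ c₂ c₃ c₄ c₅ : ℝ) :
    ∫ y in (0:ℝ)..(Real.sqrt 3 / 2),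
      (c₁*(1 - 2*y/Real.sqrt 3) + c₂*((1 - 2*y/Real.sqrt 3)*Real.cos (4*π/Real.sqrt 3*y))
        + c₃*((1 - 2*y/Real.sqrt 3)*Real.cos (8*π/Real.sqrt 3*y))
        + c₄*Real.sin (4*π/Real.sqrt 3*y) + c₅*Real.sin (8*π/Real.sqrt 3*y))
      = c₁*(Real.sqrt 3 / 4) := by
  have i1 : IntervalIntegrable (fun y : ℝ => c₁*(1 - 2*y/Real.sqrt 3)) volume 0 (Real.sqrt 3/2) :=
    (by fun_prop : Continuous _).intervalIntegrable _ _
  have i2 : IntervalIntegrable (fun y : ℝ => c₂*((1 - 2*y/Real.sqrt 3)*Real.cos (4*π/Real.sqrt 3*y))) volume 0 (Real.sqrt 3/2) :=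
    (by fun_prop : Continuous _).intervalIntegrable _ _
  have i3 : IntervalIntegrable (fun y : ℝ => c₃*((1 - 2*y/Real.sqrt 3)*Real.cos (8*π/Real.sqrt 3*y))) volume 0 (Real.sqrt 3/2) :=
    (by fun_prop : Continuous _).intervalIntegrable _ _
  have i4 : IntervalIntegrable (fun y : ℝ => c₄*Real.sin (4*π/Real.sqrt 3*y)) volume 0 (Real.sqrt 3/2) :=
    (by fun_prop : Continuous _).intervalIntegrable _ _
  have i5 : IntervalIntegrable (fun y : ℝ => c₅*Real.sin (8*π/Real.sqrt 3*y)) volume 0 (Real.sqrt 3/2) :=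
    (by fun_prop : Continuous _).intervalIntegrable _ _
  rw [intervalIntegral.integral_add (((i1.add i2).add i3).add i4) i5,
    intervalIntegral.integral_add ((i1.add i2).add i3) i4,
    intervalIntegral.integral_add (i1.add i2) i3,
    intervalIntegral.integral_add i1 i2]
  simp only [intervalIntegral.integral_const_mul]
  have o2a : ∫ y in (0:ℝ)..(Real.sqrt 3/2), (1 - 2*y/Real.sqrt 3)*Real.cos (4*π/Real.sqrt 3*y) = 0 :=
    out2 _ k1_ne k1_cos
  have o2b : ∫ y in (0:ℝ)..(Real.sqrt 3/2), (1 - 2*y/Real.sqrt 3)*Real.cos (8*π/Real.sqrt 3*y) = 0 :=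
    out2 _ k2_ne k2_cos
  have o3a : ∫ y in (0:ℝ)..(Real.sqrt 3/2), Real.sin (4*π/Real.sqrt 3*y) = 0 :=
    out3 _ k1_ne k1_cos
  have o3b : ∫ y in (0:ℝ)..(Real.sqrt 3/2), Real.sin (8*π/Real.sqrt 3*y) = 0 :=
    out3 _ k2_ne k2_cos
  rw [out1, o2a, o2b, o3a, o3b]
  ring

noncomputable def V (x y : ℝ) : ℝ :=
  (4*π/Real.sqrt 3) * Real.cos (4 * Real.pi * y / Real.sqrt 3)
    + (-(4*π/Real.sqrt 3) * Real.cos (2 * Real.pi * y / Real.sqrt 3)) * Real.cos (2 * Real.pi * x)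

lemma hasDerivAt_U (x y : ℝ) : HasDerivAt (fun t => U₁ x t) (V x y) y := by
  have e4 : (fun t : ℝ => 4 * Real.pi * t / Real.sqrt 3) = fun t => (4 * Real.pi / Real.sqrt 3) * t := by
    funext t; ring
  have e2 : (fun t : ℝ => 2 * Real.pi * t / Real.sqrt 3) = fun t => (2 * Real.pi / Real.sqrt 3) * t := by
    funext t; ring
  have h4 : HasDerivAt (fun t : ℝ => 4 * Real.pi * t / Real.sqrt 3) (4 * Real.pi / Real.sqrt 3) y := by
    rw [e4]; simpa using (hasDerivAt_id y).const_mul (4 * Real.pi / Real.sqrt 3)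
  have h2 : HasDerivAt (fun t : ℝ => 2 * Real.pi * t / Real.sqrt 3) (2 * Real.pi / Real.sqrt 3) y := by
    rw [e2]; simpa using (hasDerivAt_id y).const_mul (2 * Real.pi / Real.sqrt 3)
  have hs4 := h4.sin
  have hs2 := h2.sin
  have htot := hs4.sub (((hs2.const_mul 2).mul_const (Real.cos (2 * Real.pi * x))))
  have heq : Real.cos (4 * Real.pi * y / Real.sqrt 3) * (4 * Real.pi / Real.sqrt 3)
      - 2 * (Real.cos (2 * Real.pi * y / Real.sqrt 3) * (2 * Real.pi / Real.sqrt 3))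
        * Real.cos (2 * Real.pi * x) = V x y := by
    unfold V; ring
  have := heq ▸ htot
  exact this

lemma E2 (y : ℝ) : (∫ x in (y/Real.sqrt 3)..(1 - y/Real.sqrt 3), (U₁ x y)^2)
    = (3/2)*(1 - 2*y/Real.sqrt 3)
      + (-1)*((1 - 2*y/Real.sqrt 3)*Real.cos (4*π/Real.sqrt 3*y))
      + (-1/2)*((1 - 2*y/Real.sqrt 3)*Real.cos (8*π/Real.sqrt 3*y))
      + (3/(2*π))*Real.sin (4*π/Real.sqrt 3*y) + (-3/(4*π))*Real.sin (8*π/Real.sqrt 3*y) := by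
  have hfun : ∀ x, (U₁ x y)^2
      = (Real.sin (4*Real.pi*y/Real.sqrt 3)
          + (-2*Real.sin (2*Real.pi*y/Real.sqrt 3)) * Real.cos (2*π*x))^2 := by
    intro x; unfold U₁; ring
  simp only [hfun]
  rw [inner_integral]
  rw [show 2*π*(1 - y/Real.sqrt 3) = 2*π - 2*π/Real.sqrt 3*y by ring, Real.sin_two_pi_sub,
    show 4*π*(1 - y/Real.sqrt 3) = 4*π - 2*(2*π/Real.sqrt 3*y) by ring, sin_four_pi_sub,
    show 2*π*(y/Real.sqrt 3) = 2*π/Real.sqrt 3*y by ring,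
    show 4*π*(y/Real.sqrt 3) = 2*(2*π/Real.sqrt 3*y) by ring,
    show 4*Real.pi*y/Real.sqrt 3 = 2*(2*π/Real.sqrt 3*y) by ring,
    show 2*Real.pi*y/Real.sqrt 3 = 2*π/Real.sqrt 3*y by ring,
    show 8*π/Real.sqrt 3*y = 2*(2*(2*π/Real.sqrt 3*y)) by ring,
    show 4*π/Real.sqrt 3*y = 2*(2*π/Real.sqrt 3*y) by ring]
  simp only [Real.sin_two_mul, Real.cos_two_mul]
  linear_combination ((1 - 2*y/Real.sqrt 3)*(4*Real.cos (2*π/Real.sqrt 3*y)^2 + 2)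
    + 6*Real.sin (2*π/Real.sqrt 3*y)*Real.cos (2*π/Real.sqrt 3*y)/π)
    * Real.sin_sq_add_cos_sq (2*π/Real.sqrt 3*y)

lemma E1 (y : ℝ) : (∫ x in (y/Real.sqrt 3)..(1 - y/Real.sqrt 3), (V x y)^2)
    = ((4*π/Real.sqrt 3)^2*(3/4))*(1 - 2*y/Real.sqrt 3)
      + ((4*π/Real.sqrt 3)^2/4)*((1 - 2*y/Real.sqrt 3)*Real.cos (4*π/Real.sqrt 3*y))
      + ((4*π/Real.sqrt 3)^2/2)*((1 - 2*y/Real.sqrt 3)*Real.cos (8*π/Real.sqrt 3*y))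
      + (-(4*π/Real.sqrt 3)^2/(8*π))*Real.sin (4*π/Real.sqrt 3*y)
      + (7*(4*π/Real.sqrt 3)^2/(16*π))*Real.sin (8*π/Real.sqrt 3*y) := by
  have hfun : ∀ x, (V x y)^2
      = ((4*π/Real.sqrt 3) * Real.cos (4*Real.pi*y/Real.sqrt 3)
          + (-(4*π/Real.sqrt 3) * Real.cos (2*Real.pi*y/Real.sqrt 3)) * Real.cos (2*π*x))^2 := by
    intro x; unfold V; ring
  simp only [hfun]
  rw [inner_integral]
  rw [show 2*π*(1 - y/Real.sqrt 3) = 2*π - 2*π/Real.sqrt 3*y by ring, Real.sin_two_pi_sub,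
    show 4*π*(1 - y/Real.sqrt 3) = 4*π - 2*(2*π/Real.sqrt 3*y) by ring, sin_four_pi_sub,
    show 2*π*(y/Real.sqrt 3) = 2*π/Real.sqrt 3*y by ring,
    show 4*π*(y/Real.sqrt 3) = 2*(2*π/Real.sqrt 3*y) by ring,
    show 4*Real.pi*y/Real.sqrt 3 = 2*(2*π/Real.sqrt 3*y) by ring,
    show 2*Real.pi*y/Real.sqrt 3 = 2*π/Real.sqrt 3*y by ring,
    show 8*π/Real.sqrt 3*y = 2*(2*(2*π/Real.sqrt 3*y)) by ring,
    show 4*π/Real.sqrt 3*y = 2*(2*π/Real.sqrt 3*y) by ring]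
  simp only [Real.sin_two_mul, Real.cos_two_mul]
  ring

end Stmt8Aux

open Stmt8Aux Real in
/-- `∫_{△₀} (∂U₁/∂y)² = (8π²/3) ∫_{△₀} U₁²`, i.e. the `y`-derivative of the
`L²`-normalized first eigenfunction carries half of the eigenvalue `16π²/3`. -/
theorem statement8 :
    ∫ p in T0, (deriv (fun t => U₁ p.1 t) p.2) ^ 2
      = (8 * Real.pi ^ 2 / 3) * ∫ p in T0, (U₁ p.1 p.2) ^ 2 := by
  have hd : ∀ x y : ℝ, deriv (fun t => U₁ x t) y = V x y := fun x y => (hasDerivAt_U x y).deriv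
  have hVc : Continuous fun p : ℝ × ℝ => (V p.1 p.2)^2 := by
    unfold V; fun_prop
  have hUc : Continuous fun p : ℝ × ℝ => (U₁ p.1 p.2)^2 := by
    unfold U₁; fun_prop
  have hL : (∫ p in T0, (deriv (fun t => U₁ p.1 t) p.2) ^ 2)
      = ((4*π/Real.sqrt 3)^2*(3/4))*(Real.sqrt 3 / 4) := by
    have e1 : (∫ p in T0, (deriv (fun t => U₁ p.1 t) p.2) ^ 2)
        = ∫ p in T0, ((fun p : ℝ × ℝ => (V p.1 p.2)^2) p) := by
      simp only [hd]
    rw [e1, integral_T0 _ hVc]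
    rw [intervalIntegral.integral_congr (g := fun y =>
      ((4*π/Real.sqrt 3)^2*(3/4))*(1 - 2*y/Real.sqrt 3)
      + ((4*π/Real.sqrt 3)^2/4)*((1 - 2*y/Real.sqrt 3)*Real.cos (4*π/Real.sqrt 3*y))
      + ((4*π/Real.sqrt 3)^2/2)*((1 - 2*y/Real.sqrt 3)*Real.cos (8*π/Real.sqrt 3*y))
      + (-(4*π/Real.sqrt 3)^2/(8*π))*Real.sin (4*π/Real.sqrt 3*y)
      + (7*(4*π/Real.sqrt 3)^2/(16*π))*Real.sin (8*π/Real.sqrt 3*y)) (fun y _ => E1 y)]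
    exact outer_combo _ _ _ _ _
  have hR : (∫ p in T0, (U₁ p.1 p.2) ^ 2) = (3/2)*(Real.sqrt 3 / 4) := by
    rw [integral_T0 _ hUc]
    rw [intervalIntegral.integral_congr (g := fun y =>
      (3/2)*(1 - 2*y/Real.sqrt 3)
      + (-1)*((1 - 2*y/Real.sqrt 3)*Real.cos (4*π/Real.sqrt 3*y))
      + (-1/2)*((1 - 2*y/Real.sqrt 3)*Real.cos (8*π/Real.sqrt 3*y))
      + (3/(2*π))*Real.sin (4*π/Real.sqrt 3*y) + (-3/(4*π))*Real.sin (8*π/Real.sqrt 3*y))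
      (fun y _ => E2 y)]
    exact outer_combo _ _ _ _ _
  rw [hL, hR]
  have h3 : Real.sqrt 3 * Real.sqrt 3 = 3 := Real.mul_self_sqrt (by norm_num)
  have hne := sqrt3_ne
  field_simp
  ring_nf
  nlinarith [h3]
end

section
/- Let p = (x,y) with x ≥ 1/2, x² + y² ≤ 1 and 0 < y < 0.11, and let P := 1 + √(x² + y²) + √((1−x)² + y²) be the perimeter of the triangle with vertices (0,0), (1,0), p, whose area is y/2. Then for every real Λ with Λ ≥ π²(1+y)²/y², one has Λ·(y/2) − (4π²/(3+√(π√3))²)·(P + √(2πy))²/(2y) > 0. (Combined with the Freitas–Siudeja lower bound λ₁(△^p) ≥ π²(1+y)²/y², this shows J₂(△^p) > 0 on the degenerate region Ω_down.) -/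
set_option maxHeartbeats 1000000


/-- Positivity of `J₂` on the degenerate region: if `x ≥ 1/2`, `x² + y² ≤ 1`,
`0 < y < 0.11`, and `Λ ≥ π²(1+y)²/y²`, then
`Λ·(y/2) − (4π²/(3+√(π√3))²)·(P + √(2πy))²/(2y) > 0`, where `P` is the perimeter of the
triangle with vertices `(0,0)`, `(1,0)`, `(x,y)`. -/
theorem statement19 (x y Λ : ℝ) (hx : 1 / 2 ≤ x) (hxy : x ^ 2 + y ^ 2 ≤ 1)
    (hy : 0 < y) (hy1 : y < 0.11)
    (hΛ : Real.pi ^ 2 * (1 + y) ^ 2 / y ^ 2 ≤ Λ) :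
    0 < Λ * (y / 2)
        - 4 * Real.pi ^ 2 / (3 + Real.sqrt (Real.pi * Real.sqrt 3)) ^ 2
          * ((1 + Real.sqrt (x ^ 2 + y ^ 2) + Real.sqrt ((1 - x) ^ 2 + y ^ 2))
              + Real.sqrt (2 * Real.pi * y)) ^ 2 / (2 * y) := by
  have hπ := Real.pi_gt_d6
  have hπ' := Real.pi_lt_d2
  have hπpos := Real.pi_pos
  have h3 : (1.732 : ℝ) ≤ Real.sqrt 3 := by
    rw [show (1.732:ℝ) = Real.sqrt (1.732 ^ 2) from (Real.sqrt_sq (by norm_num)).symm]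
    exact Real.sqrt_le_sqrt (by norm_num)
  set s := Real.sqrt (Real.pi * Real.sqrt 3) with hs
  have hs2 : (2.33 : ℝ) ≤ s := by
    rw [hs, show (2.33:ℝ) = Real.sqrt (2.33 ^ 2) from (Real.sqrt_sq (by norm_num)).symm]
    apply Real.sqrt_le_sqrt
    nlinarith
  have hx1 : x ≤ 1 := by nlinarith [sq_nonneg y]
  set a := Real.sqrt (x ^ 2 + y ^ 2) with hadef
  set b := Real.sqrt ((1 - x) ^ 2 + y ^ 2) with hbdef
  set c := Real.sqrt (2 * Real.pi * y) with hcdef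
  have ha : a ≤ x + y ^ 2 := by
    rw [hadef, show x + y ^ 2 = Real.sqrt ((x + y ^ 2) ^ 2) from
      (Real.sqrt_sq (by nlinarith)).symm]
    apply Real.sqrt_le_sqrt
    nlinarith
  have hb : b ≤ (1 - x) + y := by
    rw [hbdef, show (1 - x) + y = Real.sqrt (((1 - x) + y) ^ 2) from
      (Real.sqrt_sq (by nlinarith)).symm]
    apply Real.sqrt_le_sqrt
    nlinarith
  have hc0 : 0 ≤ c := Real.sqrt_nonneg _
  have hcsq : c ^ 2 = 2 * Real.pi * y := Real.sq_sqrt (by positivity)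
  have hA : (0:ℝ) < 0.11 - y := by linarith
  -- quartic bound
  have hquart : 25.2 * y < (1.33 + 3.33 * y - 2 * y ^ 2) ^ 2 := by
    nlinarith [mul_pos hA hy, mul_nonneg hA.le (sq_nonneg y), sq_nonneg (0.11 - y),
      mul_nonneg (mul_nonneg hA.le hA.le) hy.le, sq_nonneg y, mul_pos hy hy]
  -- key scalar bound: 2c < 1.33 + 3.33 y - 2 y^2
  have hc : 2 * c < 1.33 + 3.33 * y - 2 * y ^ 2 := by
    have hR : (0:ℝ) < 1.33 + 3.33 * y - 2 * y ^ 2 := by nlinarith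
    have hsq : (2 * c) ^ 2 < (1.33 + 3.33 * y - 2 * y ^ 2) ^ 2 := by
      have h8 : (2 * c) ^ 2 = 8 * Real.pi * y := by rw [mul_pow, hcsq]; ring
      have h9 : 8 * Real.pi * y < 25.2 * y := by nlinarith
      linarith [h8 ▸ (h9.trans hquart)]
    nlinarith [hsq, hR, hc0]
  have ha0 : 0 ≤ a := Real.sqrt_nonneg _
  have hb0 : 0 ≤ b := Real.sqrt_nonneg _
  set Q := (1 + a + b) + c with hQdef
  have hQ0 : 0 ≤ Q := by positivity
  have h2Q : 2 * Q < (3 + s) * (1 + y) := by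
    have hgap : (0:ℝ) ≤ (s - 2.33) * (1 + y) := by nlinarith
    nlinarith [ha, hb, hc, hgap]
  have hspos : (0:ℝ) < 3 + s := by linarith
  have hkey : 4 * Real.pi ^ 2 * Q ^ 2 < Real.pi ^ 2 * (1 + y) ^ 2 * (3 + s) ^ 2 := by
    have h4 : (2 * Q) ^ 2 < ((3 + s) * (1 + y)) ^ 2 := by nlinarith
    nlinarith [h4, pow_pos hπpos 2]
  have h2y : (0:ℝ) < 2 * y := by linarith
  have hE : 4 * Real.pi ^ 2 / (3 + s) ^ 2 * Q ^ 2 / (2 * y)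
      < Real.pi ^ 2 * (1 + y) ^ 2 / (2 * y) := by
    have e1 : 4 * Real.pi ^ 2 / (3 + s) ^ 2 * Q ^ 2 / (2 * y)
        = (4 * Real.pi ^ 2 * Q ^ 2) / ((3 + s) ^ 2 * (2 * y)) := by
      field_simp
    rw [e1, div_lt_div_iff₀ (by positivity) h2y]
    nlinarith [mul_lt_mul_of_pos_right hkey h2y]
  have hΛ' : Real.pi ^ 2 * (1 + y) ^ 2 / (2 * y) ≤ Λ * (y / 2) := by
    have h := mul_le_mul_of_nonneg_right hΛ (le_of_lt (half_pos hy))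
    have heq : Real.pi ^ 2 * (1 + y) ^ 2 / y ^ 2 * (y / 2)
        = Real.pi ^ 2 * (1 + y) ^ 2 / (2 * y) := by
      field_simp
    linarith [heq ▸ h]
  linarith [hE, hΛ']
end
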